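/- Let (X,d) be a distance space such that (T_d,d∞) is a metric space (T_d is non-empty and d∞(f,g) < ∞ for all f,g ∈ T_d). Let K := ⋃_{x∈X} κ(x) ⊆ T_d with the metric d∞, and let T_K be the metric tight span of (K,d∞), i.e., the set of ⪯-minimal elements of P_K := {F : K → ℝ : F(k₁) + F(k₂) ≥ d∞(k₁,k₂) for all k₁,k₂ ∈ K}. Then the map ψ : T_d → ℝ^K defined by ψ(f)(k) = d∞(f,k) maps T_d bijectively onto T_K and satisfies d∞(ψ(f),ψ(g)) = d∞(f,g) for all f,g ∈ T_d; in particular (T_d,d∞) is isometric to (T_K,d∞). -/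

import Mathlib

open scoped ENNReal

section CoreDefs

variable {Y : Type*}

/-- A distance space: symmetric, nonnegative, vanishing on the diagonal. -/
def IsDistance (d : Y → Y → ℝ) : Prop :=
  (∀ x y, 0 ≤ d x y) ∧ (∀ x y, d x y = d y x) ∧ ∀ x, d x x = 0

/-- The set `P_d` of functions dominating the distance `d`. -/
def Pd (d : Y → Y → ℝ) : Set (Y → ℝ) :=
  {f | ∀ x y, d x y ≤ f x + f y}

/-- The tight span `T_d`: pointwise-minimal elements of `P_d`. -/
def Td (d : Y → Y → ℝ) : Set (Y → ℝ) :=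
  {f | f ∈ Pd d ∧ ∀ g ∈ Pd d, g ≤ f → g = f}

/-- The sup-distance `d∞(f,g) = sup_x |f x - g x|`, valued in `[0,∞]`. -/
noncomputable def dInfty (f g : Y → ℝ) : ℝ≥0∞ :=
  ⨆ y, edist (f y) (g y)

/-- `κ(x) = {f ∈ T_d : f x = 0}`. -/
def kappa (d : Y → Y → ℝ) (x : Y) : Set (Y → ℝ) :=
  {f | f ∈ Td d ∧ f x = 0}

/-- A pseudometric: symmetric, nonnegative, vanishing on the diagonal,
satisfying the triangle inequality. -/
def IsPseudometric (ρ : Y → Y → ℝ) : Prop :=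
  (∀ x y, 0 ≤ ρ x y) ∧ (∀ x y, ρ x y = ρ y x) ∧ (∀ x, ρ x x = 0) ∧
  ∀ x y z, ρ x z ≤ ρ x y + ρ y z

/-- `M(d)`: the set of pseudometrics dominating `d`. -/
def Md (d : Y → Y → ℝ) : Set (Y → Y → ℝ) :=
  {ρ | IsPseudometric ρ ∧ ∀ x y, d x y ≤ ρ x y}

end CoreDefs

section KDefs

variable {Y : Type*}

/-- `K = ⋃_{x ∈ X} κ(x)`. -/
def Kset (d : Y → Y → ℝ) : Set (Y → ℝ) := ⋃ x : Y, kappa d x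

/-- `P_K` for the metric space `(K, d∞)`. -/
def PK (d : Y → Y → ℝ) : Set (↥(Kset d) → ℝ) :=
  {F | ∀ k₁ k₂ : ↥(Kset d),
    (dInfty (k₁ : Y → ℝ) (k₂ : Y → ℝ)).toReal ≤ F k₁ + F k₂}

/-- The metric tight span `T_K` of `(K, d∞)`. -/
def TK (d : Y → Y → ℝ) : Set (↥(Kset d) → ℝ) :=
  {F | F ∈ PK d ∧ ∀ G ∈ PK d, G ≤ F → G = F}

/-- The map `ψ : T_d → ℝ^K`, `ψ(f)(k) = d∞(f,k)`. -/
noncomputable def psiK (d : Y → Y → ℝ) (f : Y → ℝ) : ↥(Kset d) → ℝ :=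
  fun k => (dInfty f (k : Y → ℝ)).toReal

end KDefs

/-!
Every `g ∈ T_d` is at `d∞`-distance exactly `g x` from some `k ∈ κ(x)`, while any
`f ∈ T_d` satisfies `f x ≤ d∞(f, k)`. Hence `f x - g x ≤ ψ f k - ψ g k`, which together
with the triangle inequality `|ψ f k - ψ g k| ≤ d∞(f, g)` makes `ψ` an isometry, hence
injective. The same points of `K` witness the extremality of `ψ f` in `P_K`, and a preimage
of `F ∈ T_K` is any point of `T_d` below `x ↦ ⨅ k, F k + k x`.
-/

section TightSpan

variable {Y : Type*} {d : Y → Y → ℝ} {f g p : Y → ℝ}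

lemma nonneg_of_mem_Pd (hdiag : ∀ x, d x x = 0) (hf : f ∈ Pd d) (x : Y) : 0 ≤ f x := by
  linarith [hdiag x ▸ hf x x]

lemma mem_Td_of_forall_exists_add_lt (hf : f ∈ Pd d)
    (h : ∀ x, ∀ ε > 0, ∃ y, f x + f y < d x y + ε) : f ∈ Td d := by
  refine ⟨hf, fun g hg hgf => funext fun x => le_antisymm (hgf x) ?_⟩
  by_contra! hlt
  obtain ⟨y, hy⟩ := h x (f x - g x) (sub_pos.2 hlt)
  linarith [hg x y, hgf y]

/-- If no `y` came `ε`-close, lowering `f` by `ε / 2` at `x` would keep it in `P_d` (the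
diagonal term being covered by `y = x`). -/
lemma exists_add_lt_of_mem_Td (hsymm : ∀ x y, d x y = d y x)
    (hf : f ∈ Td d) (x : Y) {ε : ℝ} (hε : 0 < ε) : ∃ y, f x + f y < d x y + ε := by
  classical
  by_contra! hfar
  set g := Function.update f x (f x - ε / 2)
  have hg : g ∈ Pd d := by
    intro y z
    by_cases hy : y = x <;> by_cases hz : z = x <;>
      simp only [g, Function.update_apply, hy, hz, if_true, if_false]
    · linarith [hfar x]
    · linarith [hfar z]
    · linarith [hfar y, hsymm x y]
    · exact hf.1 y z
  have hgf : g ≤ f := update_le_iff.2 ⟨by linarith, fun _ _ => le_rfl⟩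
  have := congrFun (hf.2 g hg hgf) x
  simp only [g, Function.update_self] at this
  linarith

lemma sub_le_of_forall_sub_le (hsymm : ∀ x y, d x y = d y x)
    (hf : f ∈ Td d) (hg : g ∈ Pd d) {c : ℝ} (hc : ∀ z, g z - f z ≤ c) (y : Y) :
    f y - g y ≤ c := by
  refine le_of_forall_pos_lt_add fun ε hε => ?_
  obtain ⟨z, hz⟩ := exists_add_lt_of_mem_Td hsymm hf y hε
  linarith [hg y z, hc z]

lemma iInf_mem_Pd_of_isChain {c : Set (Y → ℝ)} (hcd : c ⊆ Pd d)
    (hc : IsChain (· ≤ ·) c) (hne : c.Nonempty) : (fun x => ⨅ g : c, (g : Y → ℝ) x) ∈ Pd d := by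
  have := hne.to_subtype
  intro x y
  refine le_ciInf_add_ciInf fun g₁ g₂ => ?_
  rcases hc.total g₁.2 g₂.2 with h | h
  · linarith [hcd g₁.2 x y, h y]
  · linarith [hcd g₂.2 x y, h x]

lemma exists_mem_Td_le (hdiag : ∀ x, d x x = 0) (hp : p ∈ Pd d) : ∃ f ∈ Td d, f ≤ p := by
  let s : Set (Y → ℝ)ᵒᵈ := OrderDual.ofDual ⁻¹' {g | g ∈ Pd d ∧ g ≤ p}
  have hlb : ∀ c ⊆ s, IsChain (· ≤ ·) c → ∀ g ∈ c, ∃ lb ∈ s, ∀ g' ∈ c, g' ≤ lb := by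
    intro c hcs hc g hg
    let c' : Set (Y → ℝ) := OrderDual.toDual ⁻¹' c
    have hcd : c' ⊆ Pd d := fun g hg => (hcs hg).1
    have hbdd (x : Y) : BddBelow (Set.range fun g : c' => (g : Y → ℝ) x) :=
      ⟨0, by rintro _ ⟨g, rfl⟩; exact nonneg_of_mem_Pd hdiag (hcd g.2) x⟩
    refine ⟨OrderDual.toDual fun x => ⨅ g : c', (g : Y → ℝ) x,
      ⟨iInf_mem_Pd_of_isChain hcd hc.symm ⟨g, hg⟩, fun x => ?_⟩,
      fun g' hg' x => ciInf_le (hbdd x) ⟨g', hg'⟩⟩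
    exact (ciInf_le (hbdd x) ⟨g, hg⟩).trans ((hcs hg).2 x)
  obtain ⟨m, -, hm⟩ := zorn_le_nonempty₀ s hlb (OrderDual.toDual p) ⟨hp, le_rfl⟩
  refine ⟨OrderDual.ofDual m, ⟨hm.1.1, fun g hg hgm => ?_⟩, hm.1.2⟩
  exact le_antisymm hgm (hm.2 (y := OrderDual.toDual g) ⟨hg, hgm.trans hm.1.2⟩ hgm)

lemma dInfty_comm (f g : Y → ℝ) : dInfty f g = dInfty g f := by
  simp only [dInfty, edist_comm]

lemma dInfty_self (f : Y → ℝ) : dInfty f f = 0 := by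
  simp [dInfty]

lemma edist_le_dInfty (f g : Y → ℝ) (y : Y) : edist (f y) (g y) ≤ dInfty f g :=
  le_iSup (fun y => edist (f y) (g y)) y

lemma eq_of_dInfty_eq_zero (h : dInfty f g = 0) : f = g :=
  funext fun y => edist_le_zero.1 (h ▸ edist_le_dInfty f g y)

lemma dInfty_triangle (f g h : Y → ℝ) : dInfty f h ≤ dInfty f g + dInfty g h :=
  iSup_le fun y => (edist_triangle _ _ _).trans (add_le_add (edist_le_dInfty f g y)
    (edist_le_dInfty g h y))

lemma dInfty_le_ofReal {c : ℝ} (h : ∀ y, |f y - g y| ≤ c) : dInfty f g ≤ ENNReal.ofReal c :=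
  iSup_le fun y => by rw [edist_dist, Real.dist_eq]; exact ENNReal.ofReal_le_ofReal (h y)

lemma abs_sub_le_toReal_dInfty (hfg : dInfty f g ≠ ⊤) (y : Y) :
    |f y - g y| ≤ (dInfty f g).toReal := by
  rw [← Real.dist_eq, dist_edist]
  exact ENNReal.toReal_mono hfg (edist_le_dInfty f g y)

lemma exists_lt_abs_sub_of_lt_toReal_dInfty [Nonempty Y] {c : ℝ} (h : c < (dInfty f g).toReal) :
    ∃ y, c < |f y - g y| := by
  by_contra! hc
  have hc0 : 0 ≤ c := (abs_nonneg _).trans (hc (Classical.arbitrary Y))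
  exact h.not_ge (ENNReal.toReal_le_of_le_ofReal hc0 (dInfty_le_ofReal hc))

lemma abs_toReal_dInfty_sub_le {h : Y → ℝ} (hfg : dInfty f g ≠ ⊤) (hfh : dInfty f h ≠ ⊤)
    (hgh : dInfty g h ≠ ⊤) :
    |(dInfty f h).toReal - (dInfty g h).toReal| ≤ (dInfty f g).toReal := by
  have h₁ := ENNReal.toReal_le_add (dInfty_triangle f g h) hfg hgh
  have h₂ := ENNReal.toReal_le_add (dInfty_triangle g f h) (dInfty_comm f g ▸ hfg) hfh
  rw [dInfty_comm g f] at h₂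
  exact abs_sub_le_iff.2 ⟨by linarith, by linarith⟩

/-- For `g ∈ T_d` and `x`, take `k ∈ T_d` below `update (g + g x) x 0 ∈ P_d`: then
`k - g ≤ g x`, hence `g - k ≤ g x`, while `g x - k x = g x`. -/
lemma exists_mem_kappa_dInfty_eq (hd : IsDistance d) (hg : g ∈ Td d) (x : Y) :
    ∃ k ∈ kappa d x, dInfty g k = ENNReal.ofReal (g x) := by
  classical
  obtain ⟨-, hsymm, hdiag⟩ := hd
  have hg0 := nonneg_of_mem_Pd hdiag hg.1
  set p := Function.update (fun y => g y + g x) x 0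
  have hp : p ∈ Pd d := by
    intro y z
    by_cases hy : y = x <;> by_cases hz : z = x <;>
      simp only [p, Function.update_apply, hy, hz, if_true, if_false]
    · simp [hdiag]
    · linarith [hg.1 x z]
    · linarith [hg.1 y x]
    · linarith [hg.1 y z, hg0 x]
  obtain ⟨k, hk, hkp⟩ := exists_mem_Td_le hdiag hp
  have hkx : k x = 0 := le_antisymm (by simpa [p] using hkp x) (nonneg_of_mem_Pd hdiag hk.1 x)
  have hkg (y : Y) : k y - g y ≤ g x := by
    have := hkp y
    by_cases hy : y = x
    · simp only [p, hy, Function.update_self] at this ⊢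
      linarith [hg0 x]
    · simp only [p, Function.update_of_ne hy] at this
      linarith
  refine ⟨k, ⟨hk, hkx⟩, le_antisymm (dInfty_le_ofReal fun y => abs_sub_le_iff.2
    ⟨sub_le_of_forall_sub_le hsymm hg hk.1 hkg y, hkg y⟩) ?_⟩
  simpa [edist_dist, Real.dist_eq, hkx, abs_of_nonneg (hg0 x)] using edist_le_dInfty g k x

end TightSpan

section Psi

variable {X : Type*} {d : X → X → ℝ} {f g : X → ℝ}

lemma mem_Td_of_mem_Kset {k : X → ℝ} (hk : k ∈ Kset d) : k ∈ Td d := by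
  obtain ⟨x, hx⟩ := Set.mem_iUnion.1 hk
  exact hx.1

lemma exists_psiK_eq (hd : IsDistance d) (hg : g ∈ Td d) (x : X) :
    ∃ k : Kset d, (k : X → ℝ) x = 0 ∧ psiK d g k = g x := by
  obtain ⟨k, hk, hgk⟩ := exists_mem_kappa_dInfty_eq hd hg x
  refine ⟨⟨k, Set.mem_iUnion.2 ⟨x, hk⟩⟩, hk.2, ?_⟩
  rw [psiK, hgk, ENNReal.toReal_ofReal (nonneg_of_mem_Pd hd.2.2 hg.1 x)]

variable (hfin : ∀ f ∈ Td d, ∀ g ∈ Td d, dInfty f g ≠ ⊤)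
include hfin

lemma le_psiK (hf : f ∈ Td d) {k : Kset d} {x : X} (hkx : (k : X → ℝ) x = 0) :
    f x ≤ psiK d f k := by
  simpa [psiK, hkx] using (le_abs_self _).trans
    (abs_sub_le_toReal_dInfty (hfin f hf k (mem_Td_of_mem_Kset k.2)) x)

lemma psiK_mem_PK (hf : f ∈ Td d) : psiK d f ∈ PK d := by
  intro k₁ k₂
  have hk₁ := hfin f hf k₁ (mem_Td_of_mem_Kset k₁.2)
  refine ENNReal.toReal_le_add ?_ hk₁ (hfin f hf k₂ (mem_Td_of_mem_Kset k₂.2))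
  exact dInfty_comm f k₁ ▸ dInfty_triangle _ f _

lemma psiK_mem_TK (hd : IsDistance d) (hf : f ∈ Td d) : psiK d f ∈ TK d := by
  refine mem_Td_of_forall_exists_add_lt (psiK_mem_PK hfin hf) fun k₀ ε hε => ?_
  have hK (k : Kset d) : (k : X → ℝ) ∈ Td d := mem_Td_of_mem_Kset k.2
  have hk₀ (k : Kset d) (y : X) :
      |(k₀ : X → ℝ) y - (k : X → ℝ) y| ≤ (dInfty (k₀ : X → ℝ) k).toReal :=
    abs_sub_le_toReal_dInfty (hfin _ (hK k₀) _ (hK k)) y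
  obtain ⟨x, -⟩ := Set.mem_iUnion.1 k₀.2
  have : Nonempty X := ⟨x⟩
  obtain ⟨y, hy⟩ := exists_lt_abs_sub_of_lt_toReal_dInfty
    (show psiK d f k₀ - ε / 2 < (dInfty f k₀).toReal by rw [psiK]; linarith)
  rcases le_total (f y) ((k₀ : X → ℝ) y) with hle | hle
  · obtain ⟨k, hky, hfk⟩ := exists_psiK_eq hd hf y
    rw [abs_of_nonpos (sub_nonpos.2 hle)] at hy
    refine ⟨k, ?_⟩
    linarith [le_abs_self ((k₀ : X → ℝ) y - (k : X → ℝ) y), hk₀ k y]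
  · obtain ⟨z, hz⟩ := exists_add_lt_of_mem_Td hd.2.1 hf y (half_pos hε)
    obtain ⟨k, hkz, hfk⟩ := exists_psiK_eq hd hf z
    have hky : d y z ≤ (k : X → ℝ) y := by linarith [(hK k).1 y z]
    rw [abs_of_nonneg (sub_nonneg.2 hle)] at hy
    refine ⟨k, ?_⟩
    linarith [neg_abs_le ((k₀ : X → ℝ) y - (k : X → ℝ) y), hk₀ k y]

lemma exists_sub_le_psiK_sub (hd : IsDistance d) (hf : f ∈ Td d) (hg : g ∈ Td d) (x : X) :
    ∃ k : Kset d, f x - g x ≤ psiK d f k - psiK d g k := by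
  obtain ⟨k, hkx, hgk⟩ := exists_psiK_eq hd hg x
  exact ⟨k, by linarith [le_psiK hfin hf hkx]⟩

lemma dInfty_psiK (hd : IsDistance d) (hf : f ∈ Td d) (hg : g ∈ Td d) :
    dInfty (psiK d f) (psiK d g) = dInfty f g := by
  have hK (k : Kset d) : (k : X → ℝ) ∈ Td d := mem_Td_of_mem_Kset k.2
  have hfg := hfin f hf g hg
  have hle : dInfty (psiK d f) (psiK d g) ≤ dInfty f g := by
    rw [← ENNReal.ofReal_toReal hfg]
    exact dInfty_le_ofReal fun k =>
      abs_toReal_dInfty_sub_le hfg (hfin f hf _ (hK k)) (hfin g hg _ (hK k))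
  have hψ := ne_top_of_le_ne_top hfg hle
  refine le_antisymm hle ?_
  rw [← ENNReal.ofReal_toReal hψ]
  refine dInfty_le_ofReal fun x => abs_sub_le_iff.2 ⟨?_, ?_⟩
  · obtain ⟨k, hk⟩ := exists_sub_le_psiK_sub hfin hd hf hg x
    exact hk.trans ((le_abs_self _).trans (abs_sub_le_toReal_dInfty hψ k))
  · obtain ⟨k, hk⟩ := exists_sub_le_psiK_sub hfin hd hg hf x
    exact hk.trans (((le_abs_self _).trans_eq (abs_sub_comm _ _)).trans
      (abs_sub_le_toReal_dInfty hψ k))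

lemma psiK_surjOn (hd : IsDistance d) (hne : (Td d).Nonempty) :
    Set.SurjOn (psiK d) (Td d) (TK d) := by
  intro F hF
  have hK (k : Kset d) : (k : X → ℝ) ∈ Td d := mem_Td_of_mem_Kset k.2
  have hF0 (k : Kset d) : 0 ≤ F k :=
    nonneg_of_mem_Pd (d := fun k₁ k₂ : Kset d => (dInfty (k₁ : X → ℝ) k₂).toReal)
      (fun k => by simp [dInfty_self]) hF.1 k
  have hbdd (x : X) : BddBelow (Set.range fun k : Kset d => F k + (k : X → ℝ) x) :=
    ⟨0, by rintro _ ⟨k, rfl⟩; exact add_nonneg (hF0 k) (nonneg_of_mem_Pd hd.2.2 (hK k).1 x)⟩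
  have hp : (fun x => ⨅ k : Kset d, F k + (k : X → ℝ) x) ∈ Pd d := by
    intro x y
    have : Nonempty (Kset d) := ⟨(exists_psiK_eq hd hne.some_mem x).choose⟩
    refine le_ciInf_add_ciInf fun k k' => ?_
    have hkk' := abs_sub_le_toReal_dInfty (hfin _ (hK k) _ (hK k')) y
    linarith [hF.1 k k', (hK k).1 x y, le_abs_self ((k : X → ℝ) y - (k' : X → ℝ) y)]
  obtain ⟨f, hf, hfp⟩ := exists_mem_Td_le hd.2.2 hp
  have hfk (k : Kset d) (y : X) : f y - (k : X → ℝ) y ≤ F k := by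
    linarith [hfp y, ciInf_le (hbdd y) k]
  have hψF : psiK d f ≤ F := fun k =>
    ENNReal.toReal_le_of_le_ofReal (hF0 k) (dInfty_le_ofReal fun y => abs_sub_le_iff.2
      ⟨hfk k y, sub_le_of_forall_sub_le hd.2.1 (hK k) hf.1 (hfk k) y⟩)
  exact ⟨f, hf, hF.2 _ (psiK_mem_PK hfin hf) hψF⟩

end Psi

theorem statement8_general {X : Type*} (d : X → X → ℝ)
    (hd : IsDistance d) (hne : (Td d).Nonempty)
    (hfin : ∀ f ∈ Td d, ∀ g ∈ Td d, dInfty f g ≠ ⊤) :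
    Set.BijOn (psiK d) (Td d) (TK d) ∧
    ∀ f ∈ Td d, ∀ g ∈ Td d, dInfty (psiK d f) (psiK d g) = dInfty f g := by
  have hiso := fun f (hf : f ∈ Td d) g (hg : g ∈ Td d) => dInfty_psiK hfin hd hf hg
  refine ⟨⟨fun f hf => psiK_mem_TK hfin hd hf, fun f hf g hg hfg => ?_,
    psiK_surjOn hfin hd hne⟩, hiso⟩
  exact eq_of_dInfty_eq_zero (by rw [← hiso f hf g hg, hfg, dInfty_self])

/-- If `(T_d, d∞)` is a metric space then `ψ(f)(k) = d∞(f,k)` maps `T_d`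
bijectively onto the metric tight span `T_K` of `(K, d∞)`, where
`K = ⋃_x κ(x)`, and `ψ` preserves `d∞`; in particular `(T_d, d∞)` is
isometric to `(T_K, d∞)`. -/
theorem statement8 {X : Type*} [Nonempty X] (d : X → X → ℝ)
    (hd : IsDistance d) (hne : (Td d).Nonempty)
    (hfin : ∀ f ∈ Td d, ∀ g ∈ Td d, dInfty f g ≠ ⊤) :
    Set.BijOn (psiK d) (Td d) (TK d) ∧
    ∀ f ∈ Td d, ∀ g ∈ Td d, dInfty (psiK d f) (psiK d g) = dInfty f g :=
  statement8_general d hd hne hfin
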